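/- Let n ≥ 2, let T be a partition of {1,…,n} into k ≥ 2 blocks, and let c ∈ ℝ. If for every n×n complex positive semidefinite matrix A with nonnegative real entries the matrix f_T[A] (entries a_{ij} within a block, c·a_{ij} across blocks) is positive semidefinite, then c ∈ [−1/(k−1), 1]. -/

import Mathlib

/-!
The all-ones matrix `J` is positive semidefinite with nonnegative entries, so `f_T[J]` is positive
semidefinite, and so is its principal submatrix on a transversal of the partition (one index from
each block). That submatrix is `(1 - c) I + c J` of size `k`, whose quadratic form is `2 - 2c` at
`eᵢ - eⱼ` and `k (1 + (k - 1) c)` at the all-ones vector.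
-/

open scoped ComplexOrder

namespace Matrix

variable {ι 𝕜 : Type*} [Fintype ι] [RCLike 𝕜]

theorem posSemidef_allOnes : (of fun _ _ => (1 : 𝕜) : Matrix ι ι 𝕜).PosSemidef := by
  simpa [vecMulVec] using posSemidef_vecMulVec_self_star (1 : ι → 𝕜)

variable [DecidableEq ι] {c : ℝ}

theorem le_one_of_posSemidef_ite {i j : ι} (hij : i ≠ j)
    (h : (of fun a b : ι => if a = b then (1 : 𝕜) else c).PosSemidef) : c ≤ 1 := by
  have hq := h.dotProduct_mulVec_nonneg (Pi.single i 1 - Pi.single j 1)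
  have : ((c : ℝ) : 𝕜) ≤ ((2 - c : ℝ) : 𝕜) := by
    push_cast
    simpa [mulVec_sub, hij, hij.symm, sub_dotProduct, dotProduct_sub, sub_add_eq_add_sub,
      one_add_one_eq_two] using hq
  linarith [RCLike.ofReal_le_ofReal.mp this]

theorem one_add_mul_nonneg_of_posSemidef_ite [Nonempty ι]
    (h : (of fun a b : ι => if a = b then (1 : 𝕜) else c).PosSemidef) :
    0 ≤ 1 + (Fintype.card ι - 1) * c := by
  have hrow (a : ι) : ∑ b, (if a = b then (1 : 𝕜) else c) =
      ((1 + (Fintype.card ι - 1) * c : ℝ) : 𝕜) := by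
    have (b : ι) :
        (if a = b then (1 : 𝕜) else c) = c + if a = b then ((1 - c : ℝ) : 𝕜) else 0 := by
      split_ifs <;> simp
    simp only [this, Finset.sum_add_distrib, Finset.sum_ite_eq, Finset.mem_univ, if_true,
      Finset.sum_const, Finset.card_univ, nsmul_eq_mul]
    push_cast
    ring
  have hq := h.dotProduct_mulVec_nonneg 1
  simp only [mulVec, dotProduct, of_apply, star_one, Pi.one_apply, mul_one, one_mul, hrow,
    Finset.sum_const, Finset.card_univ, nsmul_eq_mul] at hq
  have hcard : (0 : ℝ) < Fintype.card ι := by exact_mod_cast Fintype.card_pos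
  exact nonneg_of_mul_nonneg_right
    ((RCLike.ofReal_nonneg (K := 𝕜)).mp (by exact_mod_cast hq)) hcard

theorem mem_Icc_of_posSemidef_ite (hι : 1 < Fintype.card ι)
    (h : (of fun a b : ι => if a = b then (1 : 𝕜) else c).PosSemidef) :
    c ∈ Set.Icc (-1 / (Fintype.card ι - 1) : ℝ) 1 := by
  obtain ⟨i, j, hij⟩ := Fintype.exists_pair_of_one_lt_card hι
  have : Nonempty ι := ⟨i⟩
  have hpos : (0 : ℝ) < Fintype.card ι - 1 := by
    have : (1 : ℝ) < Fintype.card ι := by exact_mod_cast hι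
    linarith
  refine ⟨?_, le_one_of_posSemidef_ite hij h⟩
  rw [div_le_iff₀ hpos]
  linarith [one_add_mul_nonneg_of_posSemidef_ite h]

end Matrix

theorem partition_scale_posSemidef_necessity_general (n k : ℕ) (hk : 2 ≤ k)
    (π : Fin n → Fin k) (hπ : Function.Surjective π) (c : ℝ)
    (h : ∀ A : Matrix (Fin n) (Fin n) ℂ, A.PosSemidef →
      (∀ i j, (A i j).im = 0 ∧ 0 ≤ (A i j).re) →
      (Matrix.of fun i j => if π i = π j then A i j else (c : ℂ) * A i j).PosSemidef) :
    c ∈ Set.Icc (-1 / (k - 1) : ℝ) 1 := by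
  obtain ⟨s, hs⟩ := hπ.hasRightInverse
  have htransversal : (Matrix.of fun a b : Fin k => if a = b then (1 : ℂ) else c).PosSemidef := by
    convert (h _ Matrix.posSemidef_allOnes (by simp)).submatrix s using 1
    ext a b
    simp [hs a, hs b]
  simpa using Matrix.mem_Icc_of_posSemidef_ite (by simp; omega) htransversal

theorem partition_scale_posSemidef_necessity (n k : ℕ) (hn : 2 ≤ n) (hk : 2 ≤ k)
    (π : Fin n → Fin k) (hπ : Function.Surjective π) (c : ℝ)
    (h : ∀ A : Matrix (Fin n) (Fin n) ℂ, A.PosSemidef →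
      (∀ i j, (A i j).im = 0 ∧ 0 ≤ (A i j).re) →
      (Matrix.of fun i j => if π i = π j then A i j else (c : ℂ) * A i j).PosSemidef) :
    c ∈ Set.Icc (-1 / (k - 1) : ℝ) 1 :=
  partition_scale_posSemidef_necessity_general n k hk π hπ c h
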